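/- arXiv:2410.14229 — 2 statements merged into one kernel-verified Lean document; each statement's English description precedes it below -/
import Mathlib

section
/- For the random walk in potential V started at b with a < b ≤ c, the probability that the entrance time to a exceeds the hitting time of c equals (W(b) - W(a)) / (W(c) - W(a)). -/
open MeasureTheory
open scoped ENNReal NNReal

/-- Probability of a step from `i` to `j` for the random walk in potential `V`:
`p(i,i+1) = 1/(1+exp(V i - V (i-1)))`, `p(i,i-1) = 1 - p(i,i+1)`, `0` otherwise. -/
noncomputable def stepProb (V : ℤ → ℝ) (i j : ℤ) : ℝ :=
  if j = i + 1 then 1 / (1 + Real.exp (V i - V (i - 1)))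
  else if j = i - 1 then 1 - 1 / (1 + Real.exp (V i - V (i - 1)))
  else 0

/-- `P b` is the law of the nearest-neighbour Markov chain on `ℤ` started at `b`
with transition probabilities `stepProb V`, characterized through its
finite-dimensional distributions. -/
def IsRWInPotential (V : ℤ → ℝ) (P : ℤ → Measure (ℕ → ℤ)) : Prop :=
  (∀ b, IsProbabilityMeasure (P b)) ∧
  ∀ (b : ℤ) (n : ℕ) (x : ℕ → ℤ), x 0 = b →
    (P b {w | ∀ k ≤ n, w k = x k}).toReal
      = ∏ k ∈ Finset.range n, stepProb V (x k) (x (k + 1))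

/-- The scale function `W`: `W 0 = 0`, `W n = ∑_{0 ≤ k < n} e^{V k}` for `n ≥ 1`,
`W (-n) = -∑_{1 ≤ k ≤ n} e^{V (-k)}` for `n ≥ 1`. -/
noncomputable def Wfun (V : ℤ → ℝ) (z : ℤ) : ℝ :=
  if 0 ≤ z then ∑ k ∈ Finset.range z.toNat, Real.exp (V (k : ℤ))
  else -∑ k ∈ Finset.range (-z).toNat, Real.exp (V (-((k : ℤ) + 1)))

/-- Entrance time `H_a = inf {n ≥ 1 : X_n = a}`, with value `⊤` if no such time exists. -/
noncomputable def entranceTime (a : ℤ) (w : ℕ → ℤ) : ℕ∞ :=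
  sInf ((fun m : ℕ => (m : ℕ∞)) '' {m : ℕ | 1 ≤ m ∧ w m = a})

/-- Hitting time `H̃_a = inf {n ≥ 0 : X_n = a}`, with value `⊤` if no such time exists. -/
noncomputable def hittingTime (a : ℤ) (w : ℕ → ℤ) : ℕ∞ :=
  sInf ((fun m : ℕ => (m : ℕ∞)) '' {m : ℕ | w m = a})

/-- Number of visits of the path `w` to the site `a`, as an extended nonnegative real. -/
noncomputable def numVisits (a : ℤ) (w : ℕ → ℤ) : ℝ≥0∞ :=
  ∑' n : ℕ, if w n = a then (1 : ℝ≥0∞) else 0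

/-!
Let `h i = P_i(H̃_c < H̃_a)`. By the Markov property at time one, `h` is harmonic for the walk
on `(a, c)`, and `h a = 0`, `h c = 1`. Since `(1 - p(i,i+1)) / p(i,i+1) = e^{V_i - V_{i-1}}`,
harmonicity makes the increments `h (i + 1) - h i` proportional to `e^{V_i} = W (i + 1) - W i`,
so `h` is affine in `W` on `[a, c]`, and the boundary values force
`h = (W - W a) / (W c - W a)`. Started at `b ≠ a`, the entrance time to `a` is its hitting time.

The Markov property is obtained from the cylinder probabilities by uniqueness of measures:
the cylinders fixing an initial segment of the path form a π-system generating the product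
σ-algebra.
-/

lemma sInf_natCast_image_lt_iff (p q : ℕ → Prop) :
    sInf ((fun m : ℕ => (m : ℕ∞)) '' {m | p m})
        < sInf ((fun m : ℕ => (m : ℕ∞)) '' {m | q m})
      ↔ ∃ m, p m ∧ ∀ k ≤ m, ¬ q k := by
  constructor
  · intro h
    have hne : ((fun m : ℕ => (m : ℕ∞)) '' {m | p m}).Nonempty := by
      by_contra hempty
      rw [Set.not_nonempty_iff_eq_empty.mp hempty, sInf_empty] at h
      exact not_top_lt h
    obtain ⟨m, hm, hmin⟩ := csInf_mem hne
    refine ⟨m, hm, fun k hkm hk => h.not_ge ?_⟩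
    rw [← hmin]
    exact (sInf_le (Set.mem_image_of_mem _ hk)).trans (Nat.cast_le.mpr hkm)
  · rintro ⟨m, hm, hq⟩
    refine (sInf_le (Set.mem_image_of_mem _ hm)).trans_lt ?_
    refine (Nat.cast_lt.mpr m.lt_succ_self).trans_le (le_sInf ?_)
    rintro _ ⟨k, hk, rfl⟩
    by_contra! hlt
    exact hq k (Nat.lt_succ_iff.mp (Nat.cast_lt.mp hlt)) hk

open MeasurableSpace Real

section StepProb

variable (V : ℤ → ℝ) (i : ℤ)

lemma stepProb_succ : stepProb V i (i + 1) = 1 / (1 + exp (V i - V (i - 1))) := by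
  simp [stepProb]

lemma stepProb_pred : stepProb V i (i - 1) = 1 - 1 / (1 + exp (V i - V (i - 1))) := by
  simp [stepProb, show i - 1 ≠ i + 1 by omega]

lemma stepProb_of_ne {j : ℤ} (h₁ : j ≠ i + 1) (h₂ : j ≠ i - 1) : stepProb V i j = 0 := by
  simp [stepProb, h₁, h₂]

lemma stepProb_succ_pos : 0 < stepProb V i (i + 1) := by
  rw [stepProb_succ]
  positivity

lemma stepProb_succ_add_pred : stepProb V i (i + 1) + stepProb V i (i - 1) = 1 := by
  rw [stepProb_succ, stepProb_pred]
  ring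

lemma stepProb_pred_eq_exp_mul :
    stepProb V i (i - 1) = exp (V i - V (i - 1)) * stepProb V i (i + 1) := by
  rw [stepProb_succ, stepProb_pred]
  field_simp
  ring

lemma stepProb_nonneg (j : ℤ) : 0 ≤ stepProb V i j := by
  by_cases h₁ : j = i + 1
  · exact h₁ ▸ (stepProb_succ_pos V i).le
  by_cases h₂ : j = i - 1
  · rw [h₂, stepProb_pred_eq_exp_mul]
    exact mul_nonneg (exp_pos _).le (stepProb_succ_pos V i).le
  · exact (stepProb_of_ne V i h₁ h₂).ge

end StepProb

lemma Wfun_succ (V : ℤ → ℝ) (z : ℤ) : Wfun V (z + 1) = Wfun V z + exp (V z) := by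
  rcases le_or_gt 0 z with hz | hz
  · have h : (z + 1).toNat = z.toNat + 1 := by omega
    rw [Wfun, Wfun, if_pos (by omega), if_pos hz, h, Finset.sum_range_succ, Int.toNat_of_nonneg hz]
  · rcases (by omega : z = -1 ∨ z + 1 < 0) with rfl | hz'
    · simp [Wfun]
    · have h : (-z).toNat = (-(z + 1)).toNat + 1 := by omega
      have hlast : -(((-(z + 1)).toNat : ℤ) + 1) = z := by omega
      rw [Wfun, Wfun, if_neg (by omega), if_neg (by omega), h, Finset.sum_range_succ, hlast]
      ring

theorem exists_eq_add_mul_Wfun_sub_of_harmonic {V : ℤ → ℝ} {f : ℤ → ℝ} {a c : ℤ}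
    (hf : ∀ i, a < i → i < c →
      f i = stepProb V i (i + 1) * f (i + 1) + stepProb V i (i - 1) * f (i - 1)) :
    ∃ κ, ∀ i, a ≤ i → i ≤ c → f i = f a + κ * (Wfun V i - Wfun V a) := by
  obtain ⟨κ, hκ⟩ : ∃ κ, f (a + 1) - f a = κ * exp (V a) :=
    ⟨(f (a + 1) - f a) / exp (V a), (div_mul_cancel₀ _ (exp_pos _).ne').symm⟩
  -- Harmonicity at `i` says `f (i + 1) - f i = exp (V i - V (i - 1)) * (f i - f (i - 1))`.
  have hincr : ∀ i, a ≤ i → i < c → f (i + 1) - f i = κ * exp (V i) := by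
    intro i hai
    induction i, hai using Int.leInduction with
    | base => exact fun _ => hκ
    | succ i hai ih =>
      intro hic
      have hharm := hf (i + 1) (by omega) hic
      have hpred := stepProb_pred_eq_exp_mul V (i + 1)
      have hsum := stepProb_succ_add_pred V (i + 1)
      rw [add_sub_cancel_right] at hharm hpred hsum
      have hexp : exp (V (i + 1) - V i) * exp (V i) = exp (V (i + 1)) := by
        rw [← exp_add, sub_add_cancel]
      refine mul_left_cancel₀ (stepProb_succ_pos V (i + 1)).ne' ?_
      linear_combination (-1 : ℝ) * hharm - f (i + 1) * hsum + (f (i + 1) - f i) * hpred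
        + exp (V (i + 1) - V i) * stepProb V (i + 1) (i + 1 + 1) * ih (by omega)
        + stepProb V (i + 1) (i + 1 + 1) * κ * hexp
  refine ⟨κ, fun i hai => ?_⟩
  induction i, hai using Int.leInduction with
  | base => intro _; ring
  | succ i hai ih =>
    intro hic
    linear_combination ih (by omega) + hincr i hai (by omega) - κ * Wfun_succ V i

def prefixCylinder {α : Type*} (n : ℕ) (x : ℕ → α) : Set (ℕ → α) :=
  {w | ∀ k ≤ n, w k = x k}

section PrefixCylinder

variable {α : Type*}

theorem isPiSystem_prefixCylinder :
    IsPiSystem {S : Set (ℕ → α) | ∃ n x, prefixCylinder n x = S} := by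
  rintro _ ⟨n, x, rfl⟩ _ ⟨m, y, rfl⟩ ⟨v, hvx, hvy⟩
  have key : ∀ {n m x y}, n ≤ m → v ∈ prefixCylinder n x → v ∈ prefixCylinder m y →
      prefixCylinder m y ⊆ prefixCylinder n x := fun hnm hvx hvy w hw k hk =>
    (hw k (hk.trans hnm)).trans ((hvy k (hk.trans hnm)).symm.trans (hvx k hk))
  rcases le_total n m with h | h
  · exact ⟨m, y, (Set.inter_eq_right.mpr (key h hvx hvy)).symm⟩
  · exact ⟨n, x, (Set.inter_eq_left.mpr (key h hvy hvx)).symm⟩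

theorem measurableSet_prefixCylinder [MeasurableSpace α] [MeasurableSingletonClass α]
    (n : ℕ) (x : ℕ → α) : MeasurableSet (prefixCylinder n x) := by
  simp only [prefixCylinder, Set.ofPred_forall]
  exact .iInter fun k => .iInter fun _ =>
    (measurableSet_singleton (x k)).preimage (measurable_pi_apply k)

theorem pi_eq_generateFrom_prefixCylinder [MeasurableSpace α] [MeasurableSingletonClass α]
    [Countable α] :
    MeasurableSpace.pi = generateFrom {S : Set (ℕ → α) | ∃ n x, prefixCylinder n x = S} := by
  refine le_antisymm ?_ (generateFrom_le ?_)
  · rw [pi_eq_generateFrom_projections]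
    refine generateFrom_le ?_
    rintro _ ⟨k, A, -, rfl⟩
    -- every set `{w | ∀ j ≤ k, w j = y j}` is empty or a prefix cylinder
    have hpt : ∀ y : Fin (k + 1) → α,
        MeasurableSet[generateFrom {S : Set (ℕ → α) | ∃ n x, prefixCylinder n x = S}]
          {w | ∀ j : Fin (k + 1), w j = y j} := by
      intro y
      rcases Set.eq_empty_or_nonempty {w : ℕ → α | ∀ j : Fin (k + 1), w j = y j}
        with h | ⟨v, hv⟩
      · rw [h]; exact MeasurableSpace.measurableSet_empty _
      · refine measurableSet_generateFrom ⟨k, v, ?_⟩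
        ext w
        simp only [prefixCylinder, Set.mem_ofPred_eq] at hv ⊢
        exact ⟨fun hw j => (hw j (Nat.lt_succ_iff.mp j.2)).trans (hv j),
          fun hw j hj => (hw ⟨j, Nat.lt_succ_iff.mpr hj⟩).trans (hv ⟨j, _⟩).symm⟩
    have hunion : Function.eval k ⁻¹' A
        = ⋃ (y : Fin (k + 1) → α) (_ : y (Fin.last k) ∈ A),
            {w : ℕ → α | ∀ j : Fin (k + 1), w j = y j} := by
      ext w
      simp only [Set.mem_preimage, Function.eval, Set.mem_iUnion, Set.mem_ofPred_eq]
      constructor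
      · intro hw
        exact ⟨fun j : Fin (k + 1) => w j, hw, fun j => rfl⟩
      · rintro ⟨y, hy, hwy⟩
        exact hwy (Fin.last k) ▸ hy
    rw [hunion]
    exact .iUnion fun y => .iUnion fun _ => hpt y
  · rintro _ ⟨n, x, rfl⟩
    exact measurableSet_prefixCylinder n x

end PrefixCylinder

def pathShift {α : Type*} (w : ℕ → α) : ℕ → α := fun n => w (n + 1)

theorem measurable_pathShift {α : Type*} [MeasurableSpace α] :
    Measurable (pathShift : (ℕ → α) → ℕ → α) :=
  measurable_pi_lambda _ fun n => measurable_pi_apply (n + 1)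

theorem hittingTime_lt_hittingTime_iff {a c : ℤ} {w : ℕ → ℤ} :
    hittingTime c w < hittingTime a w ↔ ∃ m, w m = c ∧ ∀ k ≤ m, w k ≠ a :=
  sInf_natCast_image_lt_iff _ _

theorem entranceTime_eq_hittingTime {a : ℤ} {w : ℕ → ℤ} (h : w 0 ≠ a) :
    entranceTime a w = hittingTime a w := by
  have hset : {m : ℕ | 1 ≤ m ∧ w m = a} = {m | w m = a} := by
    ext m
    refine ⟨And.right, fun hm => ⟨Nat.one_le_iff_ne_zero.mpr ?_, hm⟩⟩
    rintro rfl
    exact h hm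
  rw [entranceTime, hittingTime, hset]

theorem measurableSet_hittingTime_lt (a c : ℤ) :
    MeasurableSet {w : ℕ → ℤ | hittingTime c w < hittingTime a w} := by
  simp only [hittingTime_lt_hittingTime_iff, Set.ofPred_exists, Set.ofPred_and, Set.ofPred_forall]
  exact .iUnion fun m => (measurableSet_singleton c).preimage (measurable_pi_apply m) |>.inter <|
    .iInter fun k => .iInter fun _ =>
      ((measurableSet_singleton a).preimage (measurable_pi_apply k)).compl

theorem hittingTime_lt_hittingTime_pathShift_iff {a c : ℤ} {w : ℕ → ℤ} (ha : w 0 ≠ a)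
    (hc : w 0 ≠ c) :
    hittingTime c (pathShift w) < hittingTime a (pathShift w)
      ↔ hittingTime c w < hittingTime a w := by
  simp only [hittingTime_lt_hittingTime_iff, pathShift]
  constructor
  · rintro ⟨m, hm, hk⟩
    refine ⟨m + 1, hm, fun k hkm => ?_⟩
    rcases k with _ | k
    exacts [ha, hk k (by omega)]
  · rintro ⟨_ | m, hm, hk⟩
    · exact absurd hm hc
    · exact ⟨m, hm, fun k hkm => hk (k + 1) (by omega)⟩

namespace IsRWInPotential

variable {V : ℤ → ℝ} {P : ℤ → Measure (ℕ → ℤ)} (hP : IsRWInPotential V P)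
include hP

theorem ae_apply_zero_eq (b : ℤ) : ∀ᵐ w ∂P b, w 0 = b := by
  have := hP.1 b
  have h := hP.2 b 0 (fun _ => b) rfl
  simp only [nonpos_iff_eq_zero, forall_eq, Finset.range_zero, Finset.prod_empty,
    ENNReal.toReal_eq_one_iff] at h
  have hmeas : MeasurableSet {w : ℕ → ℤ | w 0 = b} :=
    (measurableSet_singleton b).preimage (measurable_pi_apply 0)
  rwa [ae_iff_measure_eq hmeas.nullMeasurableSet, measure_univ]

theorem measure_prefixCylinder (b : ℤ) (n : ℕ) (x : ℕ → ℤ) :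
    P b (prefixCylinder n x)
      = if x 0 = b then ENNReal.ofReal (∏ k ∈ Finset.range n, stepProb V (x k) (x (k + 1)))
        else 0 := by
  split_ifs with hx
  · have := hP.1 b
    rw [← hP.2 b n x hx, ENNReal.ofReal_toReal (measure_ne_top _ _)]
    rfl
  · refine measure_mono_null (t := {w | ¬ w 0 = b}) (fun w hw hw0 => hx ?_)
      (ae_iff.mp (hP.ae_apply_zero_eq b))
    exact (hw 0 n.zero_le).symm.trans hw0

theorem map_pathShift (b : ℤ) :
    (P b).map pathShift
      = ENNReal.ofReal (stepProb V b (b + 1)) • P (b + 1)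
        + ENNReal.ofReal (stepProb V b (b - 1)) • P (b - 1) := by
  have := hP.1
  refine ext_of_generate_finite _ pi_eq_generateFrom_prefixCylinder isPiSystem_prefixCylinder
    ?_ ?_
  · rintro _ ⟨n, x, rfl⟩
    have hcons : pathShift ⁻¹' prefixCylinder n x
        =ᵐ[P b] prefixCylinder (n + 1) (fun | 0 => b | k + 1 => x k) := by
      rw [Filter.eventuallyEq_set]
      filter_upwards [hP.ae_apply_zero_eq b] with w hw0
      refine ⟨fun hw k hk => ?_, fun hw k hk => hw (k + 1) (by omega)⟩
      rcases k with _ | k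
      exacts [hw0, hw k (by omega)]
    rw [Measure.map_apply measurable_pathShift (measurableSet_prefixCylinder n x),
      measure_congr hcons, hP.measure_prefixCylinder, if_pos rfl, Finset.prod_range_succ']
    simp only [Measure.add_apply, Measure.smul_apply, smul_eq_mul, hP.measure_prefixCylinder]
    rw [ENNReal.ofReal_mul (Finset.prod_nonneg fun _ _ => stepProb_nonneg V _ _), mul_comm]
    by_cases h₁ : x 0 = b + 1
    · rw [if_pos h₁, if_neg (by omega), h₁, mul_zero, add_zero]
    by_cases h₂ : x 0 = b - 1
    · rw [if_neg h₁, if_pos h₂, h₂, mul_zero, zero_add]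
    · rw [if_neg h₁, if_neg h₂, stepProb_of_ne V b h₁ h₂, ENNReal.ofReal_zero]
      simp
  · simp only [Measure.add_apply, Measure.smul_apply, smul_eq_mul, measure_univ, mul_one,
      Measure.map_apply measurable_pathShift MeasurableSet.univ, Set.preimage_univ]
    rw [← ENNReal.ofReal_add (stepProb_nonneg V b _) (stepProb_nonneg V b _),
      stepProb_succ_add_pred, ENNReal.ofReal_one]

theorem toReal_measure_preimage_pathShift (b : ℤ) {A : Set (ℕ → ℤ)} (hA : MeasurableSet A) :
    (P b (pathShift ⁻¹' A)).toReal
      = stepProb V b (b + 1) * (P (b + 1) A).toReal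
        + stepProb V b (b - 1) * (P (b - 1) A).toReal := by
  have := hP.1
  rw [← Measure.map_apply measurable_pathShift hA, hP.map_pathShift b, Measure.add_apply,
    Measure.smul_apply, Measure.smul_apply, smul_eq_mul, smul_eq_mul,
    ENNReal.toReal_add (by finiteness) (by finiteness), ENNReal.toReal_mul, ENNReal.toReal_mul,
    ENNReal.toReal_ofReal (stepProb_nonneg V b _), ENNReal.toReal_ofReal (stepProb_nonneg V b _)]

theorem toReal_measure_hittingTime_lt {a c i : ℤ} (ha : i ≠ a) (hc : i ≠ c) :
    (P i {w | hittingTime c w < hittingTime a w}).toReal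
      = stepProb V i (i + 1) * (P (i + 1) {w | hittingTime c w < hittingTime a w}).toReal
        + stepProb V i (i - 1) * (P (i - 1) {w | hittingTime c w < hittingTime a w}).toReal := by
  rw [← hP.toReal_measure_preimage_pathShift i (measurableSet_hittingTime_lt a c)]
  refine congrArg ENNReal.toReal (measure_congr (Filter.eventuallyEq_set.mpr ?_))
  filter_upwards [hP.ae_apply_zero_eq i] with w hw
  exact (hittingTime_lt_hittingTime_pathShift_iff (hw ▸ ha) (hw ▸ hc)).symm

theorem measure_hittingTime_lt_eq_one {a c : ℤ} (hac : a ≠ c) :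
    P c {w | hittingTime c w < hittingTime a w} = 1 := by
  have := hP.1 c
  rw [← measure_univ (μ := P c),
    ← ae_iff_measure_eq (measurableSet_hittingTime_lt a c).nullMeasurableSet]
  filter_upwards [hP.ae_apply_zero_eq c] with w hw
  exact hittingTime_lt_hittingTime_iff.mpr
    ⟨0, hw, fun k hk => by rwa [Nat.le_zero.mp hk, hw, ne_comm]⟩

theorem measure_hittingTime_lt_eq_zero (a c : ℤ) :
    P a {w | hittingTime c w < hittingTime a w} = 0 := by
  refine measure_eq_zero_iff_ae_notMem.mpr ?_
  filter_upwards [hP.ae_apply_zero_eq a] with w hw h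
  obtain ⟨m, -, hk⟩ := hittingTime_lt_hittingTime_iff.mp h
  exact hk 0 m.zero_le hw

end IsRWInPotential

theorem ruin_formula_general (V : ℤ → ℝ) (P : ℤ → Measure (ℕ → ℤ))
    (hP : IsRWInPotential V P) (a b c : ℤ) (hab : a < b) (hbc : b ≤ c) :
    (P b {w | hittingTime c w < entranceTime a w}).toReal
      = (Wfun V b - Wfun V a) / (Wfun V c - Wfun V a) := by
  set E := {w : ℕ → ℤ | hittingTime c w < hittingTime a w}
  have hE : P b {w | hittingTime c w < entranceTime a w} = P b E := by
    refine measure_congr (Filter.eventuallyEq_set.mpr ?_)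
    filter_upwards [hP.ae_apply_zero_eq b] with w hw
    rw [Set.mem_ofPred_eq, entranceTime_eq_hittingTime (hw ▸ hab.ne')]
  obtain ⟨κ, hκ⟩ :=
    exists_eq_add_mul_Wfun_sub_of_harmonic (V := V) (f := fun i => (P i E).toReal)
    fun i hai hic => hP.toReal_measure_hittingTime_lt hai.ne' hic.ne
  have hEa : (P a E).toReal = 0 := by rw [hP.measure_hittingTime_lt_eq_zero]; rfl
  have hEc := hκ c (hab.trans_le hbc).le le_rfl
  rw [hP.measure_hittingTime_lt_eq_one (hab.trans_le hbc).ne, hEa, ENNReal.toReal_one,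
    zero_add] at hEc
  rw [hE, hκ b hab.le hbc, hEa, zero_add, eq_div_iff (right_ne_zero_of_mul (hEc ▸ one_ne_zero))]
  linear_combination -(Wfun V b - Wfun V a) * hEc

/-- for the walk in potential `V` started at `b`, with `a < b ≤ c`,
`P(H_a > H̃_c) = (W b - W a)/(W c - W a)`. -/
theorem ruin_formula (V : ℤ → ℝ) (hV0 : V 0 = 0) (P : ℤ → Measure (ℕ → ℤ))
    (hP : IsRWInPotential V P) (a b c : ℤ) (hab : a < b) (hbc : b ≤ c) :
    (P b {w | hittingTime c w < entranceTime a w}).toReal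
      = (Wfun V b - Wfun V a) / (Wfun V c - Wfun V a) :=
  ruin_formula_general V P hP a b c hab hbc
end

section
/- If the potential V satisfies the symmetry V_i = V_{-i-1} - V_{-1} for all i ≥ 0 (symmetry with respect to -1/2), then the escape probabilities from 0 to the right and to the left coincide: P_V(H_0 = ∞ | X_0 = 1) = P_V(H_0 = ∞ | X_0 = -1). -/
open MeasureTheory
open scoped ENNReal NNReal

/-!
Reflecting paths through the origin, `w ↦ -w`, maps the walk started at `1` to the walk started
at `-1` as long as it stays away from `0`: the symmetry of `V` about `-1/2` says exactly that the
increment `V i - V (i - 1)` changes sign under `i ↦ -i` for `i ≠ 0`, so the step probabilities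
satisfy `p(-i, -j) = p(i, j)` there. Hence each path prefix avoiding `0` has the same probability
as its reflection, and the escape probabilities, which are the limits of the probabilities of
avoiding `0` up to time `n`, coincide.
-/

lemma one_sub_one_div_one_add_exp (a : ℝ) :
    1 - 1 / (1 + Real.exp a) = 1 / (1 + Real.exp (-a)) := by
  rw [Real.exp_neg]
  field_simp
  ring

lemma stepProb_neg_neg {V : ℤ → ℝ} {i : ℤ}
    (h : V (-i) - V (-i - 1) = -(V i - V (i - 1))) (j : ℤ) :
    stepProb V (-i) (-j) = stepProb V i j := by
  unfold stepProb
  rw [h, one_sub_one_div_one_add_exp, neg_neg]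
  by_cases hup : j = i + 1
  · rw [if_neg (by omega), if_pos (by omega), if_pos hup]
  by_cases hdown : j = i - 1
  · rw [if_pos (by omega), if_neg hup, if_pos hdown, one_sub_one_div_one_add_exp]
  rw [if_neg (by omega), if_neg (by omega), if_neg hup, if_neg hdown]

lemma increment_neg_of_symm {V : ℤ → ℝ}
    (hsym : ∀ i : ℕ, V (i : ℤ) = V (-(i : ℤ) - 1) - V (-1)) {i : ℤ} (hi : i ≠ 0) :
    V (-i) - V (-i - 1) = -(V i - V (i - 1)) := by
  have hsym' : ∀ i : ℤ, 0 ≤ i → V i = V (-i - 1) - V (-1) := fun i hi => by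
    lift i to ℕ using hi
    exact hsym i
  rcases hi.lt_or_gt with hneg | hpos
  · have h₁ := hsym' (-i) (by omega)
    have h₂ := hsym' (-i - 1) (by omega)
    rw [show -(-i) - 1 = i - 1 by ring] at h₁
    rw [show -(-i - 1) - 1 = i by ring] at h₂
    linarith
  · have h₁ := hsym' i hpos.le
    have h₂ := hsym' (i - 1) (by omega)
    rw [show -(i - 1) - 1 = -i by ring] at h₂
    linarith

def pathPrefix (n : ℕ) (w : ℕ → ℤ) : Fin (n + 1) → ℤ := fun k => w k

lemma measurable_pathPrefix (n : ℕ) : Measurable (pathPrefix n) :=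
  measurable_pi_lambda _ fun k => measurable_pi_apply (k : ℕ)

lemma pathPrefix_surjective (n : ℕ) : Function.Surjective (pathPrefix n) :=
  fun v => ⟨fun k => if h : k < n + 1 then v ⟨k, h⟩ else 0, by ext k; simp [pathPrefix, k.isLt]⟩

lemma pathPrefix_neg (n : ℕ) (w : ℕ → ℤ) : pathPrefix n (-w) = -pathPrefix n w := rfl

lemma preimage_pathPrefix_singleton (n : ℕ) (x : ℕ → ℤ) :
    pathPrefix n ⁻¹' {pathPrefix n x} = {w | ∀ k ≤ n, w k = x k} := by
  ext w
  simp only [Set.mem_preimage, Set.mem_singleton_iff, Set.mem_ofPred_eq, funext_iff, pathPrefix]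
  exact ⟨fun h k hk => h ⟨k, by omega⟩, fun h k => h k (by omega)⟩

lemma measure_preimage_eq_of_measure_fiber_eq {Ω Ω' β : Type*} [MeasurableSpace Ω]
    [MeasurableSpace Ω'] [MeasurableSpace β] [Countable β] [MeasurableSingletonClass β]
    {μ : Measure Ω} {ν : Measure Ω'} {f : Ω → β} {g : Ω' → β}
    (hf : Measurable f) (hg : Measurable g) {s : Set β}
    (h : ∀ y ∈ s, μ (f ⁻¹' {y}) = ν (g ⁻¹' {y})) : μ (f ⁻¹' s) = ν (g ⁻¹' s) := by
  rw [← tsum_measure_preimage_singleton s.to_countable fun y _ => hf (measurableSet_singleton y),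
    ← tsum_measure_preimage_singleton s.to_countable fun y _ => hg (measurableSet_singleton y)]
  exact tsum_congr fun y => h y y.2

def zeroFreePrefixes (b : ℤ) (n : ℕ) : Set (Fin (n + 1) → ℤ) := {v | v 0 = b ∧ ∀ k, v k ≠ 0}

lemma antitone_preimage_zeroFreePrefixes (b : ℤ) :
    Antitone fun n => pathPrefix n ⁻¹' zeroFreePrefixes b n := by
  intro m n hmn w ⟨hw0, hw⟩
  exact ⟨hw0, fun k => hw (Fin.castLE (by omega) k)⟩

lemma iInter_preimage_zeroFreePrefixes (b : ℤ) :
    ⋂ n, pathPrefix n ⁻¹' zeroFreePrefixes b n = {w | w 0 = b ∧ ∀ k, w k ≠ 0} := by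
  ext w
  simp only [Set.mem_iInter, Set.mem_preimage, zeroFreePrefixes, pathPrefix, Set.mem_ofPred_eq]
  refine ⟨fun h => ⟨(h 0).1, fun k => (h k).2 (Fin.last k)⟩, fun h n => ⟨h.1, fun k => h.2 k⟩⟩

lemma setOf_entranceTime_eq_top (a : ℤ) :
    {w | entranceTime a w = ⊤} = {w | ∀ m, 1 ≤ m → w m ≠ a} := by
  ext w
  simp only [Set.mem_ofPred_eq, entranceTime, sInf_eq_top, Set.forall_mem_image,
    ENat.natCast_ne_top]
  exact ⟨fun h m hm hwm => h ⟨hm, hwm⟩, fun h m ⟨hm, hwm⟩ => h m hm hwm⟩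

namespace IsRWInPotential

variable {V : ℤ → ℝ} {P : ℤ → Measure (ℕ → ℤ)}

lemma measure_pathPrefix_preimage (hP : IsRWInPotential V P) (n : ℕ) (x : ℕ → ℤ) :
    P (x 0) (pathPrefix n ⁻¹' {pathPrefix n x})
      = ENNReal.ofReal (∏ k ∈ Finset.range n, stepProb V (x k) (x (k + 1))) := by
  have := hP.1 (x 0)
  rw [← hP.2 (x 0) n x rfl, preimage_pathPrefix_singleton,
    ENNReal.ofReal_toReal (measure_ne_top _ _)]

lemma ae_start_eq (hP : IsRWInPotential V P) (b : ℤ) : ∀ᵐ w ∂P b, w 0 = b := by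
  have := hP.1 b
  have hstart : (P b {w | ∀ k ≤ 0, w k = b}).toReal = 1 := by
    simpa using hP.2 b 0 (fun _ => b) rfl
  have hset : {w : ℕ → ℤ | ∀ k ≤ 0, w k = b} = {w | w 0 = b} := by simp
  rw [hset, ENNReal.toReal_eq_one_iff] at hstart
  exact (prob_compl_eq_zero_iff (measurableSet_eq_fun (measurable_pi_apply 0) measurable_const)).2
    hstart

lemma measure_preimage_zeroFreePrefixes_neg (hP : IsRWInPotential V P)
    (hinc : ∀ i ≠ 0, V (-i) - V (-i - 1) = -(V i - V (i - 1))) (b : ℤ) (n : ℕ) :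
    P (-b) (pathPrefix n ⁻¹' zeroFreePrefixes (-b) n)
      = P b (pathPrefix n ⁻¹' zeroFreePrefixes b n) := by
  have hreflect : pathPrefix n ⁻¹' zeroFreePrefixes (-b) n
      = (pathPrefix n ∘ Neg.neg) ⁻¹' zeroFreePrefixes b n := by
    ext w
    simp [zeroFreePrefixes, pathPrefix, neg_eq_iff_eq_neg]
  rw [hreflect]
  refine (measure_preimage_eq_of_measure_fiber_eq (measurable_pathPrefix n)
    ((measurable_pathPrefix n).comp measurable_neg) ?_).symm
  rintro v ⟨hv0, hv⟩
  obtain ⟨x, rfl⟩ := pathPrefix_surjective n v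
  have hx0 : x 0 = b := hv0
  have hfiber : (pathPrefix n ∘ Neg.neg) ⁻¹' {pathPrefix n x}
      = pathPrefix n ⁻¹' {pathPrefix n (-x)} := by
    ext w
    simp [pathPrefix_neg, neg_eq_iff_eq_neg]
  rw [hfiber, ← hx0, hP.measure_pathPrefix_preimage, show -x 0 = (-x) 0 from rfl,
    hP.measure_pathPrefix_preimage]
  refine congrArg ENNReal.ofReal (Finset.prod_congr rfl fun k hk => ?_)
  exact (stepProb_neg_neg (hinc _ (hv ⟨k, by simp at hk; omega⟩)) _).symm

lemma measure_escape_eq_iInf (hP : IsRWInPotential V P) {b : ℤ} (hb : b ≠ 0) :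
    P b {w | entranceTime 0 w = ⊤} = ⨅ n, P b (pathPrefix n ⁻¹' zeroFreePrefixes b n) := by
  have := hP.1 b
  have hae : {w | entranceTime 0 w = ⊤} =ᵐ[P b] ⋂ n, pathPrefix n ⁻¹' zeroFreePrefixes b n := by
    filter_upwards [hP.ae_start_eq b] with w hw0
    rw [setOf_entranceTime_eq_top, iInter_preimage_zeroFreePrefixes]
    refine propext ⟨fun h => ⟨hw0, fun k => ?_⟩, fun h m _ => h.2 m⟩
    rcases k with _ | m
    · exact hw0 ▸ hb
    · exact h (m + 1) (by omega)
  rw [measure_congr hae, (antitone_preimage_zeroFreePrefixes b).measure_iInter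
    (fun n => (measurable_pathPrefix n (Set.to_countable _).measurableSet).nullMeasurableSet)
    ⟨0, measure_ne_top _ _⟩]

end IsRWInPotential

theorem escape_symmetry_general (V : ℤ → ℝ)
    (hsym : ∀ i : ℕ, V (i : ℤ) = V (-(i : ℤ) - 1) - V (-1))
    (P : ℤ → Measure (ℕ → ℤ)) (hP : IsRWInPotential V P) :
    P 1 {w | entranceTime 0 w = ⊤} = P (-1) {w | entranceTime 0 w = ⊤} := by
  have hinc : ∀ i ≠ 0, V (-i) - V (-i - 1) = -(V i - V (i - 1)) :=
    fun _ hi => increment_neg_of_symm hsym hi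
  rw [hP.measure_escape_eq_iInf one_ne_zero, hP.measure_escape_eq_iInf (neg_ne_zero.2 one_ne_zero)]
  exact iInf_congr fun n => (hP.measure_preimage_zeroFreePrefixes_neg hinc 1 n).symm

/-- under the symmetry `V i = V (-i-1) - V (-1)` for all `i ≥ 0`, the
escape probabilities from `0` to the right and to the left coincide. -/
theorem escape_symmetry (V : ℤ → ℝ) (hV0 : V 0 = 0)
    (hsym : ∀ i : ℕ, V (i : ℤ) = V (-(i : ℤ) - 1) - V (-1))
    (P : ℤ → Measure (ℕ → ℤ)) (hP : IsRWInPotential V P) :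
    P 1 {w | entranceTime 0 w = ⊤} = P (-1) {w | entranceTime 0 w = ⊤} :=
  escape_symmetry_general V hsym P hP
end
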